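/- arXiv:0712.0558 — 6 statements merged into one kernel-verified Lean document; each statement's English description precedes it below -/
import Mathlib

section
/- If (A,C) is an observable linear dynamical system (the intersection of kernels of C·A^j for j ≥ 0 is zero) and g ∈ GL(n,k) satisfies gAg⁻¹ = A and Cg⁻¹ = C, then g is the identity. -/
open Matrix

theorem observable_trivial_stabilizer
    {k : Type} [Field k] {n p : ℕ}
    (A : Matrix (Fin n) (Fin n) k) (C : Matrix (Fin p) (Fin n) k)
    (ho : ⨅ j : ℕ, LinearMap.ker ((C * A ^ j).mulVecLin) = ⊥)
    (g : GL (Fin n) k)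
    (hA : (g : Matrix (Fin n) (Fin n) k) * A * (↑g⁻¹ : Matrix (Fin n) (Fin n) k) = A)
    (hC : C * (↑g⁻¹ : Matrix (Fin n) (Fin n) k) = C) :
    g = 1 := by
  set G : Matrix (Fin n) (Fin n) k := (g : Matrix (Fin n) (Fin n) k) with hG
  have hinv : (↑g⁻¹ : Matrix (Fin n) (Fin n) k) * G = 1 := g.inv_mul
  have hCg : C * G = C := by
    calc C * G = C * (↑g⁻¹ : Matrix (Fin n) (Fin n) k) * G := by rw [hC]
    _ = C * ((↑g⁻¹ : Matrix (Fin n) (Fin n) k) * G) := by rw [Matrix.mul_assoc]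
    _ = C := by rw [hinv, Matrix.mul_one]
  have hcomm : Commute A G := by
    have : G * A = A * G := by
      calc G * A = G * A * ((↑g⁻¹ : Matrix (Fin n) (Fin n) k) * G) := by
            rw [hinv, Matrix.mul_one]
      _ = (G * A * (↑g⁻¹ : Matrix (Fin n) (Fin n) k)) * G := by
            rw [Matrix.mul_assoc (G * A)]
      _ = A * G := by rw [hA]
    exact this.symm
  have key : ∀ j : ℕ, C * A ^ j * G = C * A ^ j := by
    intro j
    have : A ^ j * G = G * A ^ j := (hcomm.pow_left j).eq
    rw [Matrix.mul_assoc, this, ← Matrix.mul_assoc, hCg]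
  have hGx : ∀ x : Fin n → k, G *ᵥ x = x := by
    intro x
    have hmem : G *ᵥ x - x ∈ (⊥ : Submodule k (Fin n → k)) := by
      rw [← ho, Submodule.mem_iInf]
      intro j
      rw [LinearMap.mem_ker]
      rw [Matrix.mulVecLin_apply, Matrix.mulVec_sub, Matrix.mulVec_mulVec, key j,
        sub_self]
    exact sub_eq_zero.mp ((Submodule.mem_bot k).mp hmem)
  have hG1 : G = 1 := by
    ext i j
    have := congrFun (hGx (Pi.single j 1)) i
    simpa [Matrix.mulVec_single, Matrix.one_apply, Pi.single_apply, eq_comm] using this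
  exact Units.ext hG1
end

section
/- A linear dynamical system Σ = (A,B,C,D) is controllable if and only if the Lomadze system Φ_L(Σ) = (K,L,M) with K = [I_n; 0], L = [A; C], M = [[0, B],[I_p, D]] is 1-upperstable, i.e., for all subspaces U ⊆ k^n, V ⊆ k^{n+p}: (i) if K(U)+L(U) ⊆ V and dim U + dim V > 0 then dim U ≤ dim V; (ii) if K(U)+L(U) ⊆ V, im M ⊆ V, and dim U + dim V < 2n+p, then n+p−dim V < n−dim U. -/
open Matrix

set_option maxHeartbeats 1000000 in
theorem controllable_iff_one_upperstable
    {k : Type} [Field k] [IsAlgClosed k] [CharZero k] {n m p : ℕ} (hn : 0 < n)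
    (A : Matrix (Fin n) (Fin n) k) (B : Matrix (Fin n) (Fin m) k)
    (C : Matrix (Fin p) (Fin n) k) (D : Matrix (Fin p) (Fin m) k) :
    (⨆ j : ℕ, LinearMap.range ((A ^ j * B).mulVecLin) = ⊤) ↔
      (∀ (U : Submodule k (Fin n → k)) (V : Submodule k (Fin n ⊕ Fin p → k)),
        (Submodule.map (fromRows (1 : Matrix (Fin n) (Fin n) k)
              (0 : Matrix (Fin p) (Fin n) k)).mulVecLin U ⊔
            Submodule.map (fromRows A C).mulVecLin U ≤ V →
          0 < Module.finrank k U + Module.finrank k V →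
          Module.finrank k U ≤ Module.finrank k V) ∧
        (Submodule.map (fromRows (1 : Matrix (Fin n) (Fin n) k)
              (0 : Matrix (Fin p) (Fin n) k)).mulVecLin U ⊔
            Submodule.map (fromRows A C).mulVecLin U ≤ V →
          LinearMap.range (fromBlocks (0 : Matrix (Fin n) (Fin p) k) B
              (1 : Matrix (Fin p) (Fin p) k) D).mulVecLin ≤ V →
          Module.finrank k U + Module.finrank k V < 2 * n + p →
          (n + p - Module.finrank k V : ℤ) < (n - Module.finrank k U : ℤ))) := by
  classical
  set K : Matrix (Fin n ⊕ Fin p) (Fin n) k :=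
    fromRows (1 : Matrix (Fin n) (Fin n) k) (0 : Matrix (Fin p) (Fin n) k) with hKdef
  set L : Matrix (Fin n ⊕ Fin p) (Fin n) k := fromRows A C with hLdef
  set M : Matrix (Fin n ⊕ Fin p) (Fin p ⊕ Fin m) k :=
    fromBlocks (0 : Matrix (Fin n) (Fin p) k) B (1 : Matrix (Fin p) (Fin p) k) D with hMdef
  set π : (Fin n ⊕ Fin p → k) →ₗ[k] (Fin n → k) := LinearMap.funLeft k k Sum.inl with hπdef
  have hKapp : ∀ u : Fin n → k, K.mulVecLin u = Sum.elim u 0 := by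
    intro u
    simp [hKdef, Matrix.mulVecLin_apply]
  have hLapp : ∀ u : Fin n → k, L.mulVecLin u = Sum.elim (A *ᵥ u) (C *ᵥ u) := by
    intro u
    simp [hLdef, Matrix.mulVecLin_apply]
  have hMapp : ∀ v : Fin p ⊕ Fin m → k,
      M.mulVecLin v = Sum.elim (B *ᵥ (v ∘ Sum.inr)) ((v ∘ Sum.inl) + D *ᵥ (v ∘ Sum.inr)) := by
    intro v
    simp [hMdef, Matrix.mulVecLin_apply, Matrix.fromBlocks_mulVec]
  have hπelim : ∀ (a : Fin n → k) (b : Fin p → k), π (Sum.elim a b) = a := by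
    intro a b
    funext i
    simp [hπdef, LinearMap.funLeft_apply]
  have hπK : π.comp K.mulVecLin = LinearMap.id := by
    apply LinearMap.ext
    intro u
    simp [hKapp, hπelim]
  have hπL : π.comp L.mulVecLin = A.mulVecLin := by
    apply LinearMap.ext
    intro u
    simp [hLapp, hπelim, Matrix.mulVecLin_apply]
  have hKinj : Function.Injective K.mulVecLin := by
    have h : Function.LeftInverse π K.mulVecLin := by
      intro u
      rw [hKapp, hπelim]
    exact h.injective
  set P : Submodule k (Fin n ⊕ Fin p → k) := LinearMap.ker π with hPdef
  have hπsurj : Function.Surjective π :=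
    LinearMap.funLeft_surjective_of_injective k k Sum.inl Sum.inl_injective
  have hfullrank : Module.finrank k (Fin n ⊕ Fin p → k) = n + p := by
    rw [Module.finrank_pi]
    simp
  have hPdim : Module.finrank k P = p := by
    have h := LinearMap.finrank_range_add_finrank_ker π
    rw [LinearMap.range_eq_top.2 hπsurj, finrank_top, Module.finrank_fin_fun, hfullrank,
      ← hPdef] at h
    omega
  have hmemP : ∀ x : Fin n ⊕ Fin p → k, x ∈ P ↔ (∀ i, x (Sum.inl i) = 0) := by
    intro x
    constructor
    · intro hx i
      have : π x = 0 := hx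
      exact congrFun this i
    · intro hx
      show π x = 0
      funext i
      exact hx i
  have hPelim : ∀ b : Fin p → k, Sum.elim (0 : Fin n → k) b ∈ P := by
    intro b
    rw [hmemP]
    intro i
    rfl
  -- finrank of image under K
  have hKmapdim : ∀ U : Submodule k (Fin n → k),
      Module.finrank k (Submodule.map K.mulVecLin U) = Module.finrank k U :=
    fun U => (LinearEquiv.finrank_eq (Submodule.equivMapOfInjective _ hKinj U)).symm
  -- intersection of K-image with P is trivial
  have hdisj : ∀ U : Submodule k (Fin n → k),
      Submodule.map K.mulVecLin U ⊓ P = ⊥ := by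
    intro U
    rw [eq_bot_iff]
    rintro x ⟨hx1, hx2⟩
    obtain ⟨u, _, rfl⟩ := hx1
    have hu : u = 0 := by
      have h0 : π (K.mulVecLin u) = 0 := hx2
      rw [hKapp, hπelim] at h0
      exact h0
    simp [hu]
  -- reachability invariance
  have hreach : ∀ U : Submodule k (Fin n → k),
      Submodule.map A.mulVecLin U ≤ U → LinearMap.range B.mulVecLin ≤ U →
      ∀ j, LinearMap.range (A ^ j * B).mulVecLin ≤ U := by
    intro U hAU hBU j
    induction j with
    | zero => simpa using hBU
    | succ j ih =>
        have hpow : A ^ (j + 1) * B = A * (A ^ j * B) := by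
          rw [pow_succ']
          exact Matrix.mul_assoc _ _ _
        rw [hpow, Matrix.mulVecLin_mul, LinearMap.range_comp]
        exact le_trans (Submodule.map_mono ih) hAU
  constructor
  · -- forward direction
    intro hctrl U V
    constructor
    · -- condition (i)
      intro hUV _hpos
      rw [← hKmapdim U]
      exact Submodule.finrank_mono (le_trans le_sup_left hUV)
    · -- condition (ii)
      intro hUV hM hlt
      by_contra hcon
      push_neg at hcon
      have hVle : Module.finrank k V ≤ Module.finrank k U + p := by omega
      have hPV : P ≤ V := by
        intro q hq
        have hq0 : ∀ i, q (Sum.inl i) = 0 := (hmemP q).mp hq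
        have hqe : q = M.mulVecLin (Sum.elim (q ∘ Sum.inr) 0) := by
          rw [hMapp]
          funext i
          cases i with
          | inl i => simpa using hq0 i
          | inr i => simp [Matrix.mulVec]
        rw [hqe]
        exact hM ⟨_, rfl⟩
      set S : Submodule k (Fin n ⊕ Fin p → k) := Submodule.map K.mulVecLin U ⊔ P with hSdef
      have hSV : S ≤ V := sup_le (le_trans le_sup_left hUV) hPV
      have hSdim : Module.finrank k S = Module.finrank k U + p := by
        have h := Submodule.finrank_sup_add_finrank_inf_eq (Submodule.map K.mulVecLin U) P
        rw [hdisj U, finrank_bot, hKmapdim U, hPdim, ← hSdef] at h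
        omega
      have hVS : S = V :=
        Submodule.eq_of_le_of_finrank_le hSV (by omega)
      have hmapS : Submodule.map π S = U := by
        rw [hSdef, Submodule.map_sup, ← Submodule.map_comp, hπK, Submodule.map_id]
        have hPbot : Submodule.map π P = ⊥ := by
          rw [eq_bot_iff]
          rintro x ⟨q, hq, rfl⟩
          exact hq
        rw [hPbot, sup_bot_eq]
      have hAinv : Submodule.map A.mulVecLin U ≤ U := by
        rintro x ⟨u, hu, rfl⟩
        have hLu : L.mulVecLin u ∈ V :=
          hUV (le_sup_right (α := Submodule k (Fin n ⊕ Fin p → k)) (Submodule.mem_map_of_mem hu))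
        rw [← hVS] at hLu
        have hm : π (L.mulVecLin u) ∈ Submodule.map π S := Submodule.mem_map_of_mem hLu
        rw [hmapS] at hm
        have : π (L.mulVecLin u) = A.mulVecLin u := LinearMap.congr_fun hπL u
        rwa [this] at hm
      have hBU : LinearMap.range B.mulVecLin ≤ U := by
        rintro x ⟨v, rfl⟩
        have hMv : M.mulVecLin (Sum.elim 0 v) ∈ V := hM ⟨_, rfl⟩
        rw [← hVS] at hMv
        have hm : π (M.mulVecLin (Sum.elim 0 v)) ∈ Submodule.map π S :=
          Submodule.mem_map_of_mem hMv
        rw [hmapS] at hm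
        have heq : π (M.mulVecLin (Sum.elim 0 v)) = B.mulVecLin v := by
          rw [hMapp]
          simp [hπelim, Matrix.mulVecLin_apply]
        rwa [heq] at hm
      have hUtop : U = ⊤ := by
        rw [eq_top_iff, ← hctrl]
        exact iSup_le (hreach U hAinv hBU)
      have hUdim : Module.finrank k U = n := by
        rw [hUtop, finrank_top, Module.finrank_fin_fun]
      have hVdim : Module.finrank k V = n + p := by
        rw [← hVS, hSdim, hUdim]
      omega
  · -- backward direction
    intro H
    by_contra hne
    set R : Submodule k (Fin n → k) := ⨆ j : ℕ, LinearMap.range (A ^ j * B).mulVecLin with hRdef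
    have hRle : Module.finrank k R ≤ n := by
      have := Submodule.finrank_le R
      rwa [Module.finrank_fin_fun] at this
    have hRlt : Module.finrank k R < n := by
      rcases lt_or_eq_of_le hRle with h | h
      · exact h
      · exfalso
        apply hne
        apply Submodule.eq_top_of_finrank_eq
        rw [h, Module.finrank_fin_fun]
    have hARle : Submodule.map A.mulVecLin R ≤ R := by
      rw [hRdef, Submodule.map_iSup]
      apply iSup_le
      intro j
      have : Submodule.map A.mulVecLin (LinearMap.range (A ^ j * B).mulVecLin) =
          LinearMap.range (A ^ (j + 1) * B).mulVecLin := by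
        rw [← LinearMap.range_comp, ← Matrix.mulVecLin_mul, ← Matrix.mul_assoc, ← pow_succ']
      rw [this]
      exact le_iSup (fun j => LinearMap.range (A ^ j * B).mulVecLin) (j + 1)
    have hBR : LinearMap.range B.mulVecLin ≤ R := by
      have h0 : LinearMap.range (A ^ 0 * B).mulVecLin ≤ R :=
        le_iSup (fun j => LinearMap.range (A ^ j * B).mulVecLin) 0
      simpa using h0
    set V : Submodule k (Fin n ⊕ Fin p → k) := Submodule.map K.mulVecLin R ⊔ P with hVdef
    have hcond1 : Submodule.map K.mulVecLin R ⊔ Submodule.map L.mulVecLin R ≤ V := by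
      apply sup_le le_sup_left
      rintro x ⟨u, hu, rfl⟩
      have hdecomp : L.mulVecLin u = K.mulVecLin (A *ᵥ u) + Sum.elim (0 : Fin n → k) (C *ᵥ u) := by
        rw [hLapp, hKapp]
        funext i
        cases i <;> simp
      rw [hdecomp]
      apply Submodule.add_mem
      · apply le_sup_left (α := Submodule k (Fin n ⊕ Fin p → k))
        exact Submodule.mem_map_of_mem (hARle ⟨u, hu, rfl⟩)
      · exact le_sup_right (α := Submodule k (Fin n ⊕ Fin p → k)) (hPelim _)
    have hcond2 : LinearMap.range M.mulVecLin ≤ V := by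
      rintro x ⟨v, rfl⟩
      have hdecomp : M.mulVecLin v =
          K.mulVecLin (B *ᵥ (v ∘ Sum.inr)) + Sum.elim (0 : Fin n → k) ((v ∘ Sum.inl) + D *ᵥ (v ∘ Sum.inr)) := by
        rw [hMapp, hKapp]
        funext i
        cases i <;> simp
      rw [hdecomp]
      apply Submodule.add_mem
      · apply le_sup_left (α := Submodule k (Fin n ⊕ Fin p → k))
        exact Submodule.mem_map_of_mem (hBR ⟨_, rfl⟩)
      · exact le_sup_right (α := Submodule k (Fin n ⊕ Fin p → k)) (hPelim _)
    have hVledim : Module.finrank k V ≤ Module.finrank k R + p := by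
      have h := Submodule.finrank_sup_add_finrank_inf_eq (Submodule.map K.mulVecLin R) P
      rw [hdisj R, finrank_bot, hKmapdim R, hPdim, ← hVdef] at h
      omega
    have hlt : Module.finrank k R + Module.finrank k V < 2 * n + p := by omega
    have hfin := (H R V).2 hcond1 hcond2 hlt
    omega
end

section
/- A linear dynamical system Σ = (A,B,C,D) is observable if and only if the Lomadze system Φ_L(Σ) = (K,L,M) with K = [I_n; 0], L = [A; C], M = [[0, B],[I_p, D]] is 1-lowerstable, i.e., for all subspaces U ⊆ k^n, V ⊆ k^{n+p}: (i) if K(U)+L(U) ⊆ V and dim U + dim V > 0 then dim U < dim V; (ii) if K(U)+L(U) ⊆ V, im M ⊆ V, and dim U + dim V < 2n+p, then n+p−dim V ≤ n−dim U. -/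
open Matrix

theorem observable_iff_one_lowerstable
    {k : Type} [Field k] [IsAlgClosed k] [CharZero k] {n m p : ℕ} (hn : 0 < n)
    (A : Matrix (Fin n) (Fin n) k) (B : Matrix (Fin n) (Fin m) k)
    (C : Matrix (Fin p) (Fin n) k) (D : Matrix (Fin p) (Fin m) k) :
    (⨅ j : ℕ, LinearMap.ker ((C * A ^ j).mulVecLin) = ⊥) ↔
      (∀ (U : Submodule k (Fin n → k)) (V : Submodule k (Fin n ⊕ Fin p → k)),
        (Submodule.map (fromRows (1 : Matrix (Fin n) (Fin n) k)
              (0 : Matrix (Fin p) (Fin n) k)).mulVecLin U ⊔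
            Submodule.map (fromRows A C).mulVecLin U ≤ V →
          0 < Module.finrank k U + Module.finrank k V →
          Module.finrank k U < Module.finrank k V) ∧
        (Submodule.map (fromRows (1 : Matrix (Fin n) (Fin n) k)
              (0 : Matrix (Fin p) (Fin n) k)).mulVecLin U ⊔
            Submodule.map (fromRows A C).mulVecLin U ≤ V →
          LinearMap.range (fromBlocks (0 : Matrix (Fin n) (Fin p) k) B
              (1 : Matrix (Fin p) (Fin p) k) D).mulVecLin ≤ V →
          Module.finrank k U + Module.finrank k V < 2 * n + p →
          (n + p - Module.finrank k V : ℤ) ≤ (n - Module.finrank k U : ℤ))) := by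
  set K := (fromRows (1 : Matrix (Fin n) (Fin n) k)
      (0 : Matrix (Fin p) (Fin n) k)).mulVecLin with hKdef
  set L := (fromRows A C).mulVecLin with hLdef
  have hKapp : ∀ x : Fin n → k, K x = Sum.elim x 0 := by
    intro x
    simp [hKdef, Matrix.mulVecLin_apply, fromRows_mulVec]
  have hLapp : ∀ x : Fin n → k, L x = Sum.elim (A *ᵥ x) (C *ᵥ x) := by
    intro x
    simp [hLdef, Matrix.mulVecLin_apply, fromRows_mulVec]
  have hKinj : Function.Injective K := by
    intro x y hxy
    rw [hKapp, hKapp] at hxy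
    funext i
    have := congrFun hxy (Sum.inl i)
    simpa using this
  have hKrank : ∀ U : Submodule k (Fin n → k),
      Module.finrank k (Submodule.map K U) = Module.finrank k U := by
    intro U
    exact (Submodule.equivMapOfInjective K hKinj U).finrank_eq.symm
  constructor
  · -- observable → 1-lowerstable
    intro hobs U V
    constructor
    · intro hKL hpos
      by_contra hlt
      push_neg at hlt
      have h1 : Submodule.map K U ≤ V := le_trans le_sup_left hKL
      have h2 : Submodule.map L U ≤ V := le_trans le_sup_right hKL
      have hVeq : Submodule.map K U = V := by
        apply Submodule.eq_of_le_of_finrank_le h1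
        rw [hKrank U]; exact hlt
      -- U is A-invariant and contained in ker C
      have hinv : ∀ u ∈ U, C *ᵥ u = 0 ∧ A *ᵥ u ∈ U := by
        intro u hu
        have hLu : L u ∈ Submodule.map K U := by
          rw [hVeq]; exact h2 ⟨u, hu, rfl⟩
        obtain ⟨u', hu', heq⟩ := hLu
        rw [hKapp, hLapp] at heq
        have hA : A *ᵥ u = u' := by
          funext i; exact (congrFun heq (Sum.inl i)).symm
        have hC : C *ᵥ u = 0 := by
          funext i; exact (congrFun heq (Sum.inr i)).symm
        exact ⟨hC, hA ▸ hu'⟩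
      have hker : ∀ (j : ℕ), ∀ u ∈ U, (C * A ^ j) *ᵥ u = 0 := by
        intro j
        induction j with
        | zero => intro u hu; simpa using (hinv u hu).1
        | succ j ih =>
          intro u hu
          have : C * A ^ (j + 1) = (C * A ^ j) * A := by
            rw [pow_succ, ← Matrix.mul_assoc]
          rw [this, ← Matrix.mulVec_mulVec]
          exact ih _ (hinv u hu).2
      have hUbot : U = ⊥ := by
        rw [← le_bot_iff, ← hobs]
        intro u hu
        rw [Submodule.mem_iInf]
        intro j
        rw [LinearMap.mem_ker, Matrix.mulVecLin_apply]
        exact hker j u hu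
      have hVbot : V = ⊥ := by
        rw [← hVeq, hUbot, Submodule.map_bot]
      rw [hUbot, hVbot] at hpos
      simp at hpos
    · intro hKL hM _
      -- V contains K(U) ⊕ {0}×k^p, so dim V ≥ dim U + p
      set J := (fromRows (0 : Matrix (Fin n) (Fin p) k)
          (1 : Matrix (Fin p) (Fin p) k)).mulVecLin with hJdef
      have hJapp : ∀ x : Fin p → k, J x = Sum.elim (0 : Fin n → k) x := by
        intro x; simp [hJdef, Matrix.mulVecLin_apply, fromRows_mulVec]
      have hJinj : Function.Injective J := by
        intro x y hxy
        rw [hJapp, hJapp] at hxy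
        funext i
        simpa using congrFun hxy (Sum.inr i)
      have hJV : LinearMap.range J ≤ V := by
        rintro - ⟨x, rfl⟩
        apply hM
        refine ⟨Sum.elim x 0, ?_⟩
        rw [Matrix.mulVecLin_apply, hJapp]
        have h1 : (Sum.elim x (0 : Fin m → k)) ∘ Sum.inl = x := rfl
        have h2 : (Sum.elim x (0 : Fin m → k)) ∘ Sum.inr = 0 := rfl
        rw [fromBlocks_mulVec, h1, h2]
        simp
      have h1 : Submodule.map K U ≤ V := le_trans le_sup_left hKL
      have hdisj : Submodule.map K U ⊓ LinearMap.range J = ⊥ := by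
        rw [eq_bot_iff]
        rintro y ⟨⟨u, _, hyu⟩, ⟨x, hyx⟩⟩
        rw [hKapp] at hyu
        have hyx' : J x = y := hyx
        rw [hJapp] at hyx'
        have : y = 0 := by
          funext i
          cases i with
          | inl i => rw [← hyx']; rfl
          | inr i => rw [← hyu]; rfl
        simp [this]
      have hrJ : Module.finrank k (LinearMap.range J) = p := by
        rw [LinearMap.finrank_range_of_inj hJinj, Module.finrank_fin_fun]
      have hsum : Module.finrank k (Submodule.map K U ⊔ LinearMap.range J : Submodule k (Fin n ⊕ Fin p → k))
          = Module.finrank k U + p := by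
        have := Submodule.finrank_sup_add_finrank_inf_eq (Submodule.map K U) (LinearMap.range J)
        rw [hdisj] at this
        simp only [finrank_bot, add_zero] at this
        rw [this, hKrank U, hrJ]
      have hle : Module.finrank k U + p ≤ Module.finrank k V := by
        rw [← hsum]
        exact Submodule.finrank_mono (sup_le h1 hJV)
      omega
  · -- 1-lowerstable → observable
    intro hcond
    by_contra hne
    set W : Submodule k (Fin n → k) := ⨅ j : ℕ, LinearMap.ker ((C * A ^ j).mulVecLin) with hWdef
    have hmemW : ∀ w, w ∈ W ↔ ∀ j : ℕ, (C * A ^ j) *ᵥ w = 0 := by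
      intro w
      simp [hWdef, Submodule.mem_iInf, LinearMap.mem_ker, Matrix.mulVecLin_apply]
    have hC0 : ∀ w ∈ W, C *ᵥ w = 0 := by
      intro w hw
      have := (hmemW w).1 hw 0
      simpa using this
    have hAW : ∀ w ∈ W, A *ᵥ w ∈ W := by
      intro w hw
      rw [hmemW]
      intro j
      rw [Matrix.mulVec_mulVec, Matrix.mul_assoc, ← pow_succ]
      exact (hmemW w).1 hw (j + 1)
    have hmapL : Submodule.map L W ≤ Submodule.map K W := by
      rintro - ⟨w, hw, rfl⟩
      refine ⟨A *ᵥ w, hAW w hw, ?_⟩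
      rw [hKapp, hLapp, hC0 w hw]
    have hKL : Submodule.map K W ⊔ Submodule.map L W ≤ Submodule.map K W :=
      sup_le le_rfl hmapL
    have hWpos : 0 < Module.finrank k W := by
      rcases Nat.eq_zero_or_pos (Module.finrank k W) with h | h
      · exact absurd (Submodule.finrank_eq_zero.mp h) hne
      · exact h
    have := (hcond W (Submodule.map K W)).1 hKL (by rw [hKrank W]; omega)
    rw [hKrank W] at this
    omega
end

section
/- Let (g₀, g₁) ∈ GL_n(k) × GL_{n+p}(k) stabilize the Lomadze system (K,L,M) with K = [I_n;0], L = [A;C], M = [[0,B],[I_p,D]] coming from a controllable linear dynamical system (A,B,C,D) (i.e., g₁ K g₀⁻¹ = K, g₁ L g₀⁻¹ = L, g₁ M = M). Then g₀ = I_n and g₁ = I_{n+p}. -/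
open Matrix

theorem lomadze_image_trivial_stabilizer
    {k : Type} [Field k] {n m p : ℕ} (hn : 0 < n)
    (A : Matrix (Fin n) (Fin n) k) (B : Matrix (Fin n) (Fin m) k)
    (C : Matrix (Fin p) (Fin n) k) (D : Matrix (Fin p) (Fin m) k)
    (hc : ⨆ j : ℕ, LinearMap.range ((A ^ j * B).mulVecLin) = ⊤)
    (g₀ : GL (Fin n) k) (g₁ : GL (Fin n ⊕ Fin p) k)
    (hK : (g₁ : Matrix (Fin n ⊕ Fin p) (Fin n ⊕ Fin p) k) *
        fromRows (1 : Matrix (Fin n) (Fin n) k) (0 : Matrix (Fin p) (Fin n) k) *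
        (↑g₀⁻¹ : Matrix (Fin n) (Fin n) k) =
      fromRows (1 : Matrix (Fin n) (Fin n) k) (0 : Matrix (Fin p) (Fin n) k))
    (hL : (g₁ : Matrix (Fin n ⊕ Fin p) (Fin n ⊕ Fin p) k) * fromRows A C *
        (↑g₀⁻¹ : Matrix (Fin n) (Fin n) k) = fromRows A C)
    (hM : (g₁ : Matrix (Fin n ⊕ Fin p) (Fin n ⊕ Fin p) k) *
        fromBlocks (0 : Matrix (Fin n) (Fin p) k) B (1 : Matrix (Fin p) (Fin p) k) D =
      fromBlocks (0 : Matrix (Fin n) (Fin p) k) B (1 : Matrix (Fin p) (Fin p) k) D) :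
    g₀ = 1 ∧ g₁ = 1 := by
  set G : Matrix (Fin n ⊕ Fin p) (Fin n ⊕ Fin p) k := ↑g₁ with hG
  set g : Matrix (Fin n) (Fin n) k := ↑g₀ with hg
  have hginv : (↑g₀⁻¹ : Matrix (Fin n) (Fin n) k) * g = 1 := g₀.inv_mul
  -- turn hK, hL into statements without the inverse
  have hK' : G * fromRows (1 : Matrix (Fin n) (Fin n) k) 0 = fromRows g 0 := by
    have h := congrArg (· * g) hK
    rwa [Matrix.mul_assoc (G * fromRows 1 0), hginv, Matrix.mul_one, fromRows_mul,
      Matrix.one_mul, Matrix.zero_mul] at h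
  have hL' : G * fromRows A C = fromRows (A * g) (C * g) := by
    have h := congrArg (· * g) hL
    rwa [Matrix.mul_assoc (G * fromRows A C), hginv, Matrix.mul_one, fromRows_mul] at h
  -- block decomposition of G
  obtain ⟨P, Q, R, S, hGB⟩ : ∃ P Q R S, G = fromBlocks P Q R S :=
    ⟨G.toBlocks₁₁, G.toBlocks₁₂, G.toBlocks₂₁, G.toBlocks₂₂, (fromBlocks_toBlocks G).symm⟩
  rw [hGB] at hK' hL' hM
  erw [fromBlocks_mul_fromRows] at hK' hL'
  rw [fromBlocks_multiply] at hM
  simp only [Matrix.mul_one, Matrix.mul_zero, add_zero, zero_add, Matrix.mul_zero] at hK' hM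
  rw [fromRows_inj.eq_iff] at hK' hL'
  rw [fromBlocks_inj] at hM
  obtain ⟨hP, hR⟩ := hK'
  obtain ⟨hQ, hPB, hS, hSB⟩ := hM
  -- so P = g, R = 0, Q = 0, S = 1, and g * B = B
  subst hP; subst hR; subst hQ; subst hS
  have hgB : g * B = B := by simpa using hPB
  have hgA : g * A = A * g := by
    have := hL'.1
    simpa using this
  -- g commutes with A^j * B
  have key : ∀ j : ℕ, g * (A ^ j * B) = A ^ j * B := by
    intro j
    induction j with
    | zero => simpa using hgB
    | succ j ih =>
        rw [pow_succ', Matrix.mul_assoc, ← Matrix.mul_assoc g A, hgA,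
          Matrix.mul_assoc, ih]
  -- every vector is fixed by g
  have hfix : ∀ v : Fin n → k, g.mulVec v = v := by
    have hle : ∀ j : ℕ, LinearMap.range ((A ^ j * B).mulVecLin) ≤
        LinearMap.ker ((g - 1).mulVecLin) := by
      intro j x hx
      obtain ⟨u, rfl⟩ := hx
      simp only [LinearMap.mem_ker, mulVecLin_apply, Matrix.sub_mulVec,
        Matrix.mulVec_mulVec]
      rw [Matrix.sub_mul, key j, Matrix.one_mul, sub_self, Matrix.zero_mulVec]
    have htop : LinearMap.ker ((g - 1).mulVecLin) = ⊤ := by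
      rw [← top_le_iff, ← hc]
      exact iSup_le hle
    intro v
    have : (g - 1).mulVec v = 0 := by
      have := LinearMap.ker_eq_top.mp htop
      have h2 := congrFun (congrArg DFunLike.coe this) v
      simpa [Matrix.sub_mulVec] using h2
    have := congrArg (· + (1 : Matrix (Fin n) (Fin n) k).mulVec v) this
    simpa [Matrix.sub_mulVec, sub_add_cancel, Matrix.one_mulVec] using this
  have hg1 : g = 1 := by
    ext i j
    have := congrFun (hfix (Pi.single j 1)) i
    rw [Matrix.mulVec_single_one] at this
    simp only [col_apply] at this
    rw [this]
    by_cases h : i = j <;>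
      simp [Matrix.one_apply, h, Pi.single_apply, eq_comm]
  constructor
  · exact Units.ext hg1
  · apply Units.ext
    show G = 1
    rw [hGB, hg1, fromBlocks_one]
end

section
/- A Lomadze system S = (K,L,M) that is regular — i.e., the (n+p)×(n+p) matrix [K, M_p] has rank n+p, where M_p consists of the first p columns of M — is GL_n × GL_{n+p}-equivalent to a system in the image of Φ_L: there exist invertible matrices g₀ ∈ GL_n, g₁ ∈ GL_{n+p} and matrices A ∈ k^{n×n}, B ∈ k^{n×m}, C ∈ k^{p×n}, D ∈ k^{p×m} such that g₁Kg₀⁻¹ = [I_n;0], g₁Lg₀⁻¹ = [A;C], and g₁M = [[0,B],[I_p,D]]. -/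
open Matrix

theorem regular_system_equivalent_to_image
    {k : Type} [Field k] {n m p : ℕ} (hn : 0 < n)
    (K L : Matrix (Fin n ⊕ Fin p) (Fin n) k)
    (M : Matrix (Fin n ⊕ Fin p) (Fin p ⊕ Fin m) k)
    (hreg : IsUnit (fromCols K (M.submatrix id (Sum.inl : Fin p → Fin p ⊕ Fin m)))) :
    ∃ (g₀ : GL (Fin n) k) (g₁ : GL (Fin n ⊕ Fin p) k)
      (A : Matrix (Fin n) (Fin n) k) (B : Matrix (Fin n) (Fin m) k)
      (C : Matrix (Fin p) (Fin n) k) (D : Matrix (Fin p) (Fin m) k),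
      (g₁ : Matrix (Fin n ⊕ Fin p) (Fin n ⊕ Fin p) k) * K *
          (↑g₀⁻¹ : Matrix (Fin n) (Fin n) k) =
        fromRows (1 : Matrix (Fin n) (Fin n) k) (0 : Matrix (Fin p) (Fin n) k) ∧
      (g₁ : Matrix (Fin n ⊕ Fin p) (Fin n ⊕ Fin p) k) * L *
          (↑g₀⁻¹ : Matrix (Fin n) (Fin n) k) = fromRows A C ∧
      (g₁ : Matrix (Fin n ⊕ Fin p) (Fin n ⊕ Fin p) k) * M =
        fromBlocks (0 : Matrix (Fin n) (Fin p) k) B (1 : Matrix (Fin p) (Fin p) k) D := by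
  obtain ⟨u, hu⟩ := hreg
  have key : (↑u⁻¹ : Matrix (Fin n ⊕ Fin p) (Fin n ⊕ Fin p) k) *
      fromCols K (M.submatrix id (Sum.inl : Fin p → Fin p ⊕ Fin m)) = 1 := by
    rw [← hu]
    exact u.inv_mul
  rw [Matrix.mul_fromCols] at key
  have hone : (1 : Matrix (Fin n ⊕ Fin p) (Fin n ⊕ Fin p) k) =
      fromCols (fromRows (1 : Matrix (Fin n) (Fin n) k) 0)
        (fromRows 0 (1 : Matrix (Fin p) (Fin p) k)) := by
    rw [fromCols_fromRows_eq_fromBlocks, fromBlocks_one]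
  rw [hone, fromCols_ext_iff] at key
  set X : Matrix (Fin n ⊕ Fin p) (Fin m) k := (↑u⁻¹ : Matrix (Fin n ⊕ Fin p) (Fin n ⊕ Fin p) k) * M.toCols₂ with hX
  refine ⟨(1 : GL (Fin n) k), (u⁻¹ : GL (Fin n ⊕ Fin p) k), ((↑u⁻¹ : Matrix (Fin n ⊕ Fin p) (Fin n ⊕ Fin p) k) * L).toRows₁, X.toRows₁,
    ((↑u⁻¹ : Matrix (Fin n ⊕ Fin p) (Fin n ⊕ Fin p) k) * L).toRows₂, X.toRows₂, ?_, ?_, ?_⟩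
  · rw [Matrix.coe_units_inv] at key
    simp [key.1]
  · simp [fromRows_toRows]
  · have h1 : M.toCols₁ = M.submatrix id (Sum.inl : Fin p → Fin p ⊕ Fin m) := rfl
    rw [← fromCols_toCols M, Matrix.mul_fromCols, h1, key.2, ← hX]
    conv_lhs => rw [← fromRows_toRows X]
    rw [fromCols_fromRows_eq_fromBlocks]
end

section
/- For a controllable Lomadze system S = (K,L,M) (rank(sK+tL) = n for some (s,t), and rank[sK+tL, M] = n+p for all (s,t) ≠ (0,0)), there exist Ω = (α,β,γ,δ) ∈ GL_2(k) and a permutation matrix h ∈ GL_{p+m}(k) such that the transformed system (αK+βL, γK+δL, Mh) is regular, i.e., the first n+p columns of [αK+βL, Mh] taken as [αK+βL, (Mh)_p] form an invertible (n+p)×(n+p) matrix. -/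
open Matrix Set Submodule Module

theorem controllable_lomadze_equivalent_to_regular
    {k : Type} [Field k] [IsAlgClosed k] [CharZero k] {n m p : ℕ} (hn : 0 < n)
    (K L : Matrix (Fin (n + p)) (Fin n) k)
    (M : Matrix (Fin (n + p)) (Fin (p + m)) k)
    (hc1 : ∃ s t : k, (s • K + t • L).rank = n)
    (hc2 : ∀ s t : k, (s, t) ≠ (0, 0) →
      (fromCols (s • K + t • L) M).rank = n + p) :
    ∃ α β γ δ : k, α * δ - β * γ ≠ 0 ∧
      ∃ σ : Equiv.Perm (Fin (p + m)),
        (fromCols (α • K + β • L)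
            (Matrix.of fun (i : Fin (n + p)) (j : Fin p) =>
              M i (σ (Fin.castAdd m j)))).rank = n + p := by
  classical
  obtain ⟨s, t, hA⟩ := hc1
  have hst : (s, t) ≠ ((0 : k), 0) := by
    rintro h
    rw [Prod.mk.injEq] at h
    rw [h.1, h.2] at hA
    simp [Matrix.rank_zero] at hA
    omega
  set A := s • K + t • L with hAdef
  have hB : (fromCols A M).rank = n + p := hc2 s t hst
  have hcardA : finrank k (span k (Set.range Aᵀ)) = n := by
    exact (rank_eq_finrank_span_cols A).symm.trans hA
  have hu : LinearIndependent k Aᵀ := by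
    refine linearIndependent_iff_card_eq_finrank_span.mpr ?_
    rw [Fintype.card_fin]
    rw [Set.finrank, hcardA]
  set sset : Set (Fin (n + p) → k) := Set.range Aᵀ with hssetdef
  set tset : Set (Fin (n + p) → k) := sset ∪ Set.range Mᵀ with htsetdef
  have hrangeB : Set.range (fromCols A M)ᵀ = tset := by
    rw [transpose_fromCols]
    exact Sum.elim_range _ _
  have hspanT : span k tset = ⊤ := by
    apply Submodule.eq_top_of_finrank_eq
    rw [← hrangeB]
    change finrank k (span k (Set.range (fromCols A M).col)) = _
    rw [← rank_eq_finrank_span_cols, hB, Module.finrank_fin_fun]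
  have hsi := (linearIndepOn_id_range_iff hu.injective).mpr hu
  have hsub : sset ⊆ tset := Set.subset_union_left
  set b := hsi.extend hsub with hbdef
  have hbt : b ⊆ tset := hsi.extend_subset hsub
  have hsb : sset ⊆ b := hsi.subset_extend hsub
  have hbi : LinearIndependent k ((↑) : b → (Fin (n + p) → k)) :=
    hsi.linearIndepOn_extend hsub
  have hbspan : span k b = ⊤ := by rw [hsi.span_extend_eq_span hsub, hspanT]
  have htfin : tset.Finite := (Set.finite_range _).union (Set.finite_range _)
  have hbfin : b.Finite := htfin.subset hbt
  have hsfin : sset.Finite := Set.finite_range _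
  have hbcard : b.ncard = n + p := by
    haveI := hbfin.fintype
    have h1 := finrank_span_set_eq_card hbi
    rw [hbspan, finrank_top, Module.finrank_fin_fun] at h1
    rw [Set.ncard_eq_toFinset_card', ← h1]
  have hscard : sset.ncard = n := by
    haveI := hsfin.fintype
    rw [Set.ncard_eq_toFinset_card', ← finrank_span_set_eq_card hsi, hcardA]
  have hdcard : (b \ sset).ncard = p := by
    rw [Set.ncard_diff hsb hsfin, hbcard, hscard]
    omega
  haveI : Finite ↥(b \ sset) := (hbfin.sdiff (t := sset)).to_subtype
  have hchoice : ∀ x : ↥(b \ sset), ∃ jx : Fin (p + m), Mᵀ jx = (x : Fin (n + p) → k) := by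
    rintro ⟨x, hxb, hxs⟩
    rcases hbt hxb with h | h
    · exact absurd h hxs
    · exact h
  choose g hg using hchoice
  have hginj : Function.Injective g := by
    intro x y hxy
    apply Subtype.ext
    rw [← hg x, ← hg y, hxy]
  obtain ⟨c⟩ : Nonempty (↥(b \ sset) ≃ Fin p) :=
    ⟨Finite.equivFinOfCardEq (by rw [Nat.card_coe_set_eq, hdcard])⟩
  set f : Fin p → Fin (p + m) := g ∘ c.symm with hfdef
  have hfinj : Function.Injective f := hginj.comp c.symm.injective
  have hcastinj : Function.Injective (Fin.castAdd m : Fin p → Fin (p + m)) := by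
    intro a b h
    exact Fin.ext (by simpa using congrArg Fin.val h)
  set e : {x // x ∈ Set.range (Fin.castAdd m : Fin p → Fin (p + m))} ≃
      {x // x ∈ Set.range f} :=
    (Equiv.ofInjective _ hcastinj).symm.trans (Equiv.ofInjective f hfinj) with hedef
  have hσ : ∀ j : Fin p, e.extendSubtype (Fin.castAdd m j) = f j := by
    intro j
    rw [Equiv.extendSubtype_apply_of_mem e _ ⟨j, rfl⟩]
    simp [hedef]
  obtain ⟨γ, δ, hγδ⟩ : ∃ γ δ : k, s * δ - t * γ ≠ 0 := by
    rcases eq_or_ne s 0 with h | h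
    · have ht0 : t ≠ 0 := by
        rintro rfl
        exact hst (by simp [h])
      exact ⟨-1, 0, by simp [h, ht0]⟩
    · exact ⟨0, 1, by simpa using h⟩
  refine ⟨s, t, γ, δ, hγδ, e.extendSubtype, ?_⟩
  set N : Matrix (Fin (n + p)) (Fin p) k :=
    Matrix.of fun i j => M i (e.extendSubtype (Fin.castAdd m j)) with hNdef
  have hNT : Nᵀ = fun j => ((c.symm j : ↥(b \ sset)) : Fin (n + p) → k) := by
    funext j
    have : Nᵀ j = Mᵀ (f j) := by
      funext i
      simp [hNdef, hσ j, Matrix.transpose_apply]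
    rw [this, hfdef]
    exact hg (c.symm j)
  have hrangeN : Set.range Nᵀ = b \ sset := by
    rw [hNT]
    have : (fun j => ((c.symm j : ↥(b \ sset)) : Fin (n + p) → k)) =
        ((↑) : ↥(b \ sset) → (Fin (n + p) → k)) ∘ c.symm := rfl
    rw [this, Set.range_comp, Equiv.range_eq_univ, Set.image_univ, Subtype.range_coe]
  rw [rank_eq_finrank_span_cols]
  change finrank k (span k (Set.range (fromCols A N)ᵀ)) = n + p
  rw [transpose_fromCols]
  have hrange : Set.range (fromRows Aᵀ Nᵀ) = b := by
    rw [show Set.range (fromRows Aᵀ Nᵀ) = Set.range Aᵀ ∪ Set.range Nᵀ from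
      Sum.elim_range _ _, hrangeN]
    exact Set.union_diff_cancel hsb
  rw [hrange, hbspan, finrank_top, Module.finrank_fin_fun]
end
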